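/- arXiv:1011.4758 — 5 statements merged into one kernel-verified Lean document; each statement's English description precedes it below -/
import Mathlib

section
/- Let F be a twisting cocycle for the Hopf algebra H. Then the elements ϑ := Σ γ(F₁)F₂ and ζ := Σ F̄₂ γ⁻¹(F̄₁) are invertible in H, with ϑ⁻¹ = γ(ζ) and ζ⁻¹ = γ⁻¹(ϑ); that is, ϑ·γ(ζ) = 1 = γ(ζ)·ϑ and ζ·γ⁻¹(ϑ) = 1 = γ⁻¹(ϑ)·ζ. -/
/-!
Apply `x ⊗ y ⊗ z ↦ γ(x) y ⊗ z` to both sides of the cocycle identity. The antipode identity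
collapses the left side to `ϑ ⊗ 1` and turns the right side into `X · F`, so `X = (ϑ ⊗ 1) F⁻¹`;
applying `x ⊗ y ↦ x γ(y)` to this gives `1 = ϑ γ(ζ)`. Only the anti-multiplicativity of `γ` and
the two antipode identities enter, so the same argument applies to `F₂₁`, a twisting cocycle for
the co-opposite comultiplication, whose antipode is `γ⁻¹`; it gives `γ⁻¹(ϑ) ζ = 1`. The other two
identities follow by applying `γ` and `γ⁻¹`.
-/

open TensorProduct

noncomputable section

variable (k : Type*) [Field k] (H : Type*) [Ring H] [HopfAlgebra k H]

/-- The comultiplication of `H` as a linear map. -/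
noncomputable def comulL : H →ₗ[k] H ⊗[k] H := Coalgebra.comul

/-- The counit of `H` as a linear map. -/
noncomputable def counitL : H →ₗ[k] k := Coalgebra.counit

/-- The antipode of `H`. -/
noncomputable def anti : H →ₗ[k] H := HopfAlgebra.antipode (R := k)

/-- `F` together with its inverse `Finv` is a twisting (Drinfeld) cocycle:
`F` is invertible, `(Δ⊗id)(F)·(F⊗1) = (id⊗Δ)(F)·(1⊗F)` and `(ε⊗id)(F) = 1 = (id⊗ε)(F)`. -/
def IsCocycle (F Finv : H ⊗[k] H) : Prop :=
  F * Finv = 1 ∧ Finv * F = 1 ∧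
  (TensorProduct.assoc k H H H) ((TensorProduct.map (comulL k H) LinearMap.id F) * (F ⊗ₜ 1))
    = (TensorProduct.map LinearMap.id (comulL k H) F) * ((1 : H) ⊗ₜ F) ∧
  (TensorProduct.lid k H) (TensorProduct.map (counitL k H) LinearMap.id F) = 1 ∧
  (TensorProduct.rid k H) (TensorProduct.map LinearMap.id (counitL k H) F) = 1

/-- `ϑ = Σ γ(F₁)F₂`. -/
noncomputable def theta (F : H ⊗[k] H) : H :=
  LinearMap.mul' k H (TensorProduct.map (anti k H) LinearMap.id F)

/-- `ζ = Σ F̄₂ γ⁻¹(F̄₁)`, where `γinv` is the inverse of the antipode and `Finv = Σ F̄₁⊗F̄₂`. -/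
noncomputable def zeta (γinv : H →ₗ[k] H) (Finv : H ⊗[k] H) : H :=
  LinearMap.mul' k H (TensorProduct.map LinearMap.id γinv ((TensorProduct.comm k H H) Finv))

/-- `R` (with inverse `Rinv`) is a triangular structure: `R` is invertible,
`R Δ(h) = Δᵒᵖ(h) R`, the two hexagon identities `(Δ⊗id)(R) = R₁₃R₂₃`,
`(id⊗Δ)(R) = R₁₃R₁₂` hold, and `R₂₁ R = 1`. -/
def IsTriangular (R Rinv : H ⊗[k] H) : Prop :=
  R * Rinv = 1 ∧ Rinv * R = 1 ∧
  (∀ h : H, R * comulL k H h = (TensorProduct.comm k H H) (comulL k H h) * R) ∧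
  (TensorProduct.assoc k H H H) (TensorProduct.map (comulL k H) LinearMap.id R)
    = (TensorProduct.map LinearMap.id (TensorProduct.mk k H H 1) R) * ((1 : H) ⊗ₜ R) ∧
  (TensorProduct.map LinearMap.id (comulL k H) R)
    = (TensorProduct.map LinearMap.id (TensorProduct.mk k H H 1) R) *
      ((TensorProduct.assoc k H H H) (R ⊗ₜ (1 : H))) ∧
  ((TensorProduct.comm k H H) R) * R = 1

/-- `bcomp U V x y = (U x) ∘ₗ (V y)`, bilinearly in `x, y`. -/
noncomputable def bcomp {A B C : Type*} [AddCommMonoid A] [AddCommMonoid B] [AddCommMonoid C]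
    [Module k A] [Module k B] [Module k C]
    (U : H →ₗ[k] B →ₗ[k] C) (V : H →ₗ[k] A →ₗ[k] B) : H →ₗ[k] H →ₗ[k] (A →ₗ[k] C) :=
  ((((LinearMap.llcomp k A B C) ∘ₗ U).flip) ∘ₗ V).flip

/-- Given an action `α` of `H` on `M`, the induced action of `H ⊗ H` on `M ⊗ M`:
`pairAct α (x ⊗ y) (a ⊗ b) = (α x a) ⊗ (α y b)`. -/
noncomputable def pairAct {M : Type*} [AddCommMonoid M] [Module k M]
    (α : H →ₗ[k] M →ₗ[k] M) : H ⊗[k] H →ₗ[k] (M ⊗[k] M →ₗ[k] M ⊗[k] M) :=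
  (TensorProduct.homTensorHomMap (RingHom.id k) M M M M) ∘ₗ (TensorProduct.map α α)

/-- `sandwich α β (x ⊗ y) a = α x * a * β y`. -/
noncomputable def sandwich {E : Type*} [Ring E] [Algebra k E]
    (α β : H →ₗ[k] E) : H ⊗[k] H →ₗ[k] E →ₗ[k] E :=
  TensorProduct.lift (bcomp k H ((LinearMap.mul k E) ∘ₗ α) ((LinearMap.mul k E).flip ∘ₗ β))

/-- The adjoint action associated with `ρ : H →ₗ E`:
`adAct ρ h a = Σ ρ(h⁽¹⁾) a ρ(γ(h⁽²⁾))`. -/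
noncomputable def adAct {E : Type*} [Ring E] [Algebra k E]
    (ρ : H →ₗ[k] E) : H →ₗ[k] E →ₗ[k] E :=
  (sandwich k H ρ (ρ ∘ₗ anti k H)) ∘ₗ comulL k H

/-- The twisted comultiplication `Δ̃(h) = F⁻¹ Δ(h) F`. -/
noncomputable def comulTw (F Finv : H ⊗[k] H) : H →ₗ[k] H ⊗[k] H :=
  (LinearMap.mulRight k F) ∘ₗ (LinearMap.mulLeft k Finv) ∘ₗ comulL k H

/-- The twisted antipode `γ̃(h) = ϑ⁻¹ γ(h) ϑ`. -/
noncomputable def antiTw (ϑ ϑinv : H) : H →ₗ[k] H :=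
  (LinearMap.mulRight k ϑ) ∘ₗ (LinearMap.mulLeft k ϑinv) ∘ₗ anti k H

variable (A : Type*) [Ring A] [Algebra k A]

/-- `act` makes `A` a left `H`-module algebra:
`act` is a representation of `H`, `h•(ab) = Σ (h⁽¹⁾•a)(h⁽²⁾•b)` and `h•1 = ε(h)1`. -/
def IsModAlg (act : H →ₗ[k] Module.End k A) : Prop :=
  act 1 = 1 ∧ (∀ g h : H, act (g * h) = act g * act h) ∧
  (∀ (h : H) (a b : A),
    act h (a * b) = LinearMap.mul' k A ((pairAct k H act) (comulL k H h) (a ⊗ₜ b))) ∧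
  (∀ h : H, act h 1 = (counitL k H h) • (1 : A))

/-- The adjoint-type action of `H` on `End_k(A)`: `h.X = Σ ρ(h⁽¹⁾) ∘ X ∘ ρ(γ(h⁽²⁾))`. -/
noncomputable def dotAct (act : H →ₗ[k] Module.End k A) :
    H →ₗ[k] Module.End k A →ₗ[k] Module.End k A :=
  (sandwich k H (E := Module.End k A) act (act ∘ₗ anti k H)) ∘ₗ comulL k H

section TwistingCocycle

variable {R B : Type*} [CommSemiring R] [Semiring B] [Algebra R B]

def mulMap (f g : B →ₗ[R] B) : B ⊗[R] B →ₗ[R] B := LinearMap.mul' R B ∘ₗ map f g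

@[simp] theorem mulMap_tmul (f g : B →ₗ[R] B) (x y : B) : mulMap f g (x ⊗ₜ y) = f x * g y := rfl

theorem mulMap_comm_of_antimul {T : B →ₗ[R] B} (hT : ∀ x y, T (x * y) = T y * T x)
    (f g : B →ₗ[R] B) (w : B ⊗[R] B) :
    T (mulMap f g w) = mulMap (T ∘ₗ g) (T ∘ₗ f) (TensorProduct.comm R B B w) := by
  induction w using TensorProduct.induction_on with
  | zero => simp
  | tmul x y => simp [hT]
  | add u v hu hv => simp [hu, hv]

structure IsTwistingCocycle (Δ : B →ₗ[R] B ⊗[R] B) (ε : B →ₗ[R] R) (F Finv : B ⊗[R] B) :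
    Prop where
  mul_inv : F * Finv = 1
  inv_mul : Finv * F = 1
  cocycle : TensorProduct.assoc R B B B (map Δ .id F * (F ⊗ₜ 1)) = map .id Δ F * (1 ⊗ₜ F)
  lid_counit : TensorProduct.lid R B (map ε .id F) = 1
  rid_counit : TensorProduct.rid R B (map .id ε F) = 1

/-- `Δ` is not assumed multiplicative, so the anti-multiplicativity of `S`, a theorem for Hopf
algebras, is an axiom here. -/
structure IsAntipode (Δ : B →ₗ[R] B ⊗[R] B) (ε : B →ₗ[R] R) (S : B →ₗ[R] B) : Prop where
  map_mul : ∀ x y, S (x * y) = S y * S x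
  map_one : S 1 = 1
  mulMap_id_comul : ∀ a, mulMap S .id (Δ a) = algebraMap R B (ε a)
  mulMap_comul : ∀ a, mulMap .id S (Δ a) = algebraMap R B (ε a)

section Antipode

variable {S : B →ₗ[R] B}

theorem rTensor_mulMap_assoc_symm_mul_one_tmul (u : B ⊗[R] (B ⊗[R] B)) (v : B ⊗[R] B) :
    (mulMap S .id).rTensor B ((TensorProduct.assoc R B B B).symm (u * (1 ⊗ₜ v))) =
      (mulMap S .id).rTensor B ((TensorProduct.assoc R B B B).symm u) * v := by
  induction u using TensorProduct.induction_on with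
  | zero => simp
  | add u₁ u₂ h₁ h₂ => simp only [add_mul, map_add, h₁, h₂]
  | tmul x w =>
    induction w using TensorProduct.induction_on with
    | zero => simp
    | add w₁ w₂ h₁ h₂ => simp only [tmul_add, add_mul, map_add, h₁, h₂]
    | tmul y z =>
      induction v using TensorProduct.induction_on with
      | zero => simp
      | add v₁ v₂ h₁ h₂ => simp only [tmul_add, mul_add, map_add, h₁, h₂]
      | tmul p q => simp [mul_assoc]

theorem mulMap_mul_tmul (hS : ∀ x y, S (x * y) = S y * S x) (w : B ⊗[R] B) (f g : B) :
    mulMap S .id (w * (f ⊗ₜ g)) = S f * mulMap S .id w * g := by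
  induction w using TensorProduct.induction_on with
  | zero => simp
  | add w₁ w₂ h₁ h₂ => simp [add_mul, mul_add, h₁, h₂]
  | tmul x y => simp [hS, mul_assoc]

theorem IsAntipode.rTensor_mulMap_map_mul_tmul_one {Δ : B →ₗ[R] B ⊗[R] B} {ε : B →ₗ[R] R}
    (hS : IsAntipode Δ ε S) (u v : B ⊗[R] B) :
    (mulMap S .id).rTensor B (map Δ .id u * (v ⊗ₜ 1)) =
      mulMap S .id v ⊗ₜ TensorProduct.lid R B (map ε .id u) := by
  induction u using TensorProduct.induction_on with
  | zero => simp
  | add u₁ u₂ h₁ h₂ => simp only [add_mul, map_add, h₁, h₂, tmul_add]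
  | tmul a c =>
    have hΔa : mulMap S .id (Δ a * v) = ε a • mulMap S .id v := by
      induction v using TensorProduct.induction_on with
      | zero => simp
      | add v₁ v₂ h₁ h₂ => simp only [mul_add, map_add, h₁, h₂, smul_add]
      | tmul f g =>
        rw [mulMap_mul_tmul hS.map_mul, hS.mulMap_id_comul, ← Algebra.commutes, Algebra.smul_def,
          mul_assoc]
        rfl
    simp [hΔa, smul_tmul]

theorem IsAntipode.mulMap_rTensor_mulMap_assoc_symm_map {Δ : B →ₗ[R] B ⊗[R] B}
    {ε : B →ₗ[R] R} (hS : IsAntipode Δ ε S) (u : B ⊗[R] B) :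
    mulMap .id S ((mulMap S .id).rTensor B ((TensorProduct.assoc R B B B).symm (map .id Δ u))) =
      S (TensorProduct.rid R B (map .id ε u)) := by
  have hx : ∀ x w, mulMap .id S ((mulMap S .id).rTensor B
      ((TensorProduct.assoc R B B B).symm (x ⊗ₜ w))) = S x * mulMap .id S w := by
    intro x w
    induction w using TensorProduct.induction_on with
    | zero => simp
    | add w₁ w₂ h₁ h₂ => simp only [tmul_add, map_add, h₁, h₂, mul_add]
    | tmul y z => simp [mul_assoc]
  induction u using TensorProduct.induction_on with
  | zero => simp
  | add u₁ u₂ h₁ h₂ => simp only [map_add, h₁, h₂]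
  | tmul x y => simp [hx, hS.mulMap_comul, Algebra.algebraMap_eq_smul_one]

theorem mulMap_tmul_one_mul (c : B) (w : B ⊗[R] B) :
    mulMap .id S ((c ⊗ₜ 1) * w) = c * mulMap .id S w := by
  induction w using TensorProduct.induction_on with
  | zero => simp
  | add w₁ w₂ h₁ h₂ => simp only [mul_add, map_add, h₁, h₂]
  | tmul x y => simp [mul_assoc]

theorem IsTwistingCocycle.mulMap_mul_mulMap_eq_one {Δ : B →ₗ[R] B ⊗[R] B} {ε : B →ₗ[R] R}
    {F Finv : B ⊗[R] B} (hF : IsTwistingCocycle Δ ε F Finv) (hS : IsAntipode Δ ε S) :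
    mulMap S .id F * mulMap .id S Finv = 1 := by
  set X := (mulMap S .id).rTensor B ((TensorProduct.assoc R B B B).symm (map .id Δ F))
  have hX : X * F = mulMap S .id F ⊗ₜ 1 := by
    rw [← rTensor_mulMap_assoc_symm_mul_one_tmul, ← hF.cocycle, LinearEquiv.symm_apply_apply,
      hS.rTensor_mulMap_map_mul_tmul_one, hF.lid_counit]
  have hX' : X = (mulMap S .id F ⊗ₜ 1) * Finv := by
    rw [← hX, mul_assoc, hF.mul_inv, mul_one]
  calc mulMap S .id F * mulMap .id S Finv = mulMap .id S X := by
        rw [hX', mulMap_tmul_one_mul]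
    _ = 1 := by rw [hS.mulMap_rTensor_mulMap_assoc_symm_map, hF.rid_counit, hS.map_one]

theorem IsAntipode.comm {Δ : B →ₗ[R] B ⊗[R] B} {ε : B →ₗ[R] R} {T : B →ₗ[R] B}
    (hS : IsAntipode Δ ε S) (hTS : Function.LeftInverse T S) (hST : Function.LeftInverse S T) :
    IsAntipode ((TensorProduct.comm R B B).toLinearMap ∘ₗ Δ) ε T := by
  have hT : ∀ x y, T (x * y) = T y * T x := fun x y => by
    rw [← hST x, ← hST y, ← hS.map_mul, hTS, hTS, hTS]
  have hT1 : T 1 = 1 := by simpa [hS.map_one] using hTS 1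
  have hTalg : ∀ c, T (algebraMap R B c) = algebraMap R B c := fun c => by
    rw [Algebra.algebraMap_eq_smul_one, map_smul, hT1]
  have hTS' : T ∘ₗ S = .id := LinearMap.ext hTS
  refine ⟨hT, hT1, fun a => ?_, fun a => ?_⟩
  · rw [← hTalg, ← hS.mulMap_id_comul, mulMap_comm_of_antimul hT, hTS', LinearMap.comp_id]
    rfl
  · rw [← hTalg, ← hS.mulMap_comul, mulMap_comm_of_antimul hT, hTS', LinearMap.comp_id]
    rfl

end Antipode

variable (R B) in
def tensorReverse : B ⊗[R] (B ⊗[R] B) ≃ₐ[R] B ⊗[R] (B ⊗[R] B) :=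
  (Algebra.TensorProduct.assoc R R R B B B).symm.trans
    ((Algebra.TensorProduct.congr (Algebra.TensorProduct.comm R B B) AlgEquiv.refl).trans
      (Algebra.TensorProduct.comm R (B ⊗[R] B) B))

theorem assoc_mul (u v : (B ⊗[R] B) ⊗[R] B) :
    TensorProduct.assoc R B B B (u * v) =
      TensorProduct.assoc R B B B u * TensorProduct.assoc R B B B v :=
  map_mul (Algebra.TensorProduct.assoc R R R B B B) u v

theorem comm_mul (u v : B ⊗[R] B) :
    TensorProduct.comm R B B (u * v) = TensorProduct.comm R B B u * TensorProduct.comm R B B v :=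
  map_mul (Algebra.TensorProduct.comm R B B) u v

theorem tensorReverse_assoc_map_id (Δ : B →ₗ[R] B ⊗[R] B) (u : B ⊗[R] B) :
    tensorReverse R B (TensorProduct.assoc R B B B (map Δ .id u)) =
      map .id ((TensorProduct.comm R B B).toLinearMap ∘ₗ Δ) (TensorProduct.comm R B B u) := by
  induction u using TensorProduct.induction_on with
  | zero => simp
  | add u₁ u₂ h₁ h₂ => simp only [map_add, h₁, h₂]
  | tmul x y =>
    simp only [map_tmul, LinearMap.id_coe, id_eq, comm_tmul, LinearMap.comp_apply,
      LinearEquiv.coe_coe]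
    induction Δ x using TensorProduct.induction_on with
    | zero => simp
    | add w₁ w₂ h₁ h₂ => simp only [add_tmul, tmul_add, map_add, h₁, h₂]
    | tmul p q => rfl

theorem tensorReverse_map_id (Δ : B →ₗ[R] B ⊗[R] B) (u : B ⊗[R] B) :
    tensorReverse R B (map .id Δ u) = TensorProduct.assoc R B B B
      (map ((TensorProduct.comm R B B).toLinearMap ∘ₗ Δ) .id (TensorProduct.comm R B B u)) := by
  induction u using TensorProduct.induction_on with
  | zero => simp
  | add u₁ u₂ h₁ h₂ => simp only [map_add, h₁, h₂]
  | tmul x y =>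
    simp only [map_tmul, LinearMap.id_coe, id_eq, comm_tmul, LinearMap.comp_apply,
      LinearEquiv.coe_coe]
    induction Δ y using TensorProduct.induction_on with
    | zero => simp
    | add w₁ w₂ h₁ h₂ => simp only [add_tmul, tmul_add, map_add, h₁, h₂]
    | tmul p q => rfl

theorem tensorReverse_assoc_tmul_one (u : B ⊗[R] B) :
    tensorReverse R B (TensorProduct.assoc R B B B (u ⊗ₜ 1)) =
      1 ⊗ₜ TensorProduct.comm R B B u := by
  induction u using TensorProduct.induction_on with
  | zero => simp
  | add u₁ u₂ h₁ h₂ => simp only [add_tmul, tmul_add, map_add, h₁, h₂]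
  | tmul x y => rfl

theorem tensorReverse_one_tmul (u : B ⊗[R] B) :
    tensorReverse R B (1 ⊗ₜ u) =
      TensorProduct.assoc R B B B (TensorProduct.comm R B B u ⊗ₜ 1) := by
  induction u using TensorProduct.induction_on with
  | zero => simp
  | add u₁ u₂ h₁ h₂ => simp only [add_tmul, tmul_add, map_add, h₁, h₂]
  | tmul x y => rfl

theorem IsTwistingCocycle.comm {Δ : B →ₗ[R] B ⊗[R] B} {ε : B →ₗ[R] R} {F Finv : B ⊗[R] B}
    (hF : IsTwistingCocycle Δ ε F Finv) :
    IsTwistingCocycle ((TensorProduct.comm R B B).toLinearMap ∘ₗ Δ) ε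
      (TensorProduct.comm R B B F) (TensorProduct.comm R B B Finv) where
  mul_inv := by rw [← comm_mul, hF.mul_inv]; rfl
  inv_mul := by rw [← comm_mul, hF.inv_mul]; rfl
  cocycle := by
    let σ := tensorReverse R B
    calc _ = σ (map .id Δ F) * σ (1 ⊗ₜ F) := by
          rw [assoc_mul, tensorReverse_map_id, tensorReverse_one_tmul]
      _ = σ (TensorProduct.assoc R B B B (map Δ .id F * (F ⊗ₜ 1))) := by
          rw [hF.cocycle, map_mul]
      _ = _ := by
          rw [assoc_mul, map_mul, tensorReverse_assoc_map_id, tensorReverse_assoc_tmul_one]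
  lid_counit := by rw [map_comm, lid_comm, hF.rid_counit]
  rid_counit := by rw [map_comm, rid_comm, hF.lid_counit]

end TwistingCocycle

theorem isAntipode_anti : IsAntipode (comulL k H) (counitL k H) (anti k H) :=
  ⟨HopfAlgebra.antipode_mul_antidistrib, HopfAlgebra.antipode_one,
    HopfAlgebra.mul_antipode_rTensor_comul_apply, HopfAlgebra.mul_antipode_lTensor_comul_apply⟩

variable {k H} in
theorem IsCocycle.isTwistingCocycle {F Finv : H ⊗[k] H} (hF : IsCocycle k H F Finv) :
    IsTwistingCocycle (comulL k H) (counitL k H) F Finv :=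
  ⟨hF.1, hF.2.1, hF.2.2.1, hF.2.2.2.1, hF.2.2.2.2⟩

/-- For a twisting cocycle `F` of `H`, the elements `ϑ = Σ γ(F₁)F₂` and
`ζ = Σ F̄₂ γ⁻¹(F̄₁)` are mutually "inverse up to antipode": `ϑ⁻¹ = γ(ζ)` and `ζ⁻¹ = γ⁻¹(ϑ)`. -/
theorem twist_theta_zeta_inverse
    (F Finv : H ⊗[k] H) (hF : IsCocycle k H F Finv)
    (γinv : H →ₗ[k] H)
    (hγ1 : ∀ h : H, γinv (anti k H h) = h) (hγ2 : ∀ h : H, anti k H (γinv h) = h) :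
    theta k H F * anti k H (zeta k H γinv Finv) = 1 ∧
    anti k H (zeta k H γinv Finv) * theta k H F = 1 ∧
    zeta k H γinv Finv * γinv (theta k H F) = 1 ∧
    γinv (theta k H F) * zeta k H γinv Finv = 1 := by
  have hγ := isAntipode_anti k H
  have hγinv := hγ.comm hγ1 hγ2
  have hζ : anti k H (zeta k H γinv Finv) = mulMap .id (anti k H) Finv := by
    change anti k H (mulMap .id γinv (TensorProduct.comm k H H Finv)) = _
    rw [mulMap_comm_of_antimul hγ.map_mul, comm_comm, LinearMap.comp_id,
      show anti k H ∘ₗ γinv = .id from LinearMap.ext hγ2]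
  have hϑ : γinv (theta k H F) = mulMap γinv .id (TensorProduct.comm k H H F) := by
    change γinv (mulMap (anti k H) .id F) = _
    rw [mulMap_comm_of_antimul hγinv.map_mul, LinearMap.comp_id,
      show γinv ∘ₗ anti k H = .id from LinearMap.ext hγ1]
  have hϑζ : theta k H F * anti k H (zeta k H γinv Finv) = 1 := by
    rw [hζ]
    exact hF.isTwistingCocycle.mulMap_mul_mulMap_eq_one hγ
  have hζϑ : γinv (theta k H F) * zeta k H γinv Finv = 1 := by
    rw [hϑ]
    exact hF.isTwistingCocycle.comm.mulMap_mul_mulMap_eq_one hγinv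
  refine ⟨hϑζ, ?_, ?_, hζϑ⟩
  · simpa [hγ.map_mul, hγ2, hγ.map_one] using congrArg (anti k H) hζϑ
  · simpa [hγinv.map_mul, hγ1, hγinv.map_one] using congrArg γinv hϑζ

end
end

section
/- Let F be a twisting cocycle for the Hopf algebra H. Then in H⊗H the following two identities hold: Σ F₁⁽¹⁾ ⊗ γ(F₁⁽²⁾)F₂ = Σ F̄₁ ⊗ γ(F̄₂)ϑ, and Σ γ(F₁)F₂⁽¹⁾ ⊗ F₂⁽²⁾ = Σ ϑF̄₁ ⊗ F̄₂, where Σ F₁⁽¹⁾⊗F₁⁽²⁾⊗F₂ denotes (Δ⊗id)(F) and Σ F₁⊗F₂⁽¹⁾⊗F₂⁽²⁾ denotes (id⊗Δ)(F). -/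
open TensorProduct

noncomputable section

variable (k : Type*) [Field k] (H : Type*) [Ring H] [HopfAlgebra k H]

variable (A : Type*) [Ring A] [Algebra k A]

/-!
Put `ψ(x ⊗ y) = γ(x) y`, so that `ϑ = ψ(F)`. Because `γ` reverses products,
`ψ(y (b ⊗ c)) = γ(b) ψ(y) c`, and the antipode axiom turns this into
`ψ(Δ(v) w) = ε(v) ψ(w)`. Multiplying the cocycle identity on the right by `F⁻¹ ⊗ 1`
expresses `(Δ ⊗ id)(F)` as `(id ⊗ Δ)(F) (1 ⊗ F) (F⁻¹ ⊗ 1)`. Applying `id ⊗ ψ`, the leading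
factor contributes only `(id ⊗ ε)(F) = 1`, and the rest is `Σ F̄₁ ⊗ γ(F̄₂) ψ(F)`. The second
identity is the mirror image, using `1 ⊗ F⁻¹`, `ψ ⊗ id` and `(ε ⊗ id)(F) = 1`.
-/

namespace HopfAlgebra

variable {R A : Type*} [CommSemiring R] [Semiring A] [HopfAlgebra R A]

noncomputable def antipodeMul : A ⊗[R] A →ₗ[R] A :=
  LinearMap.mul' R A ∘ₗ TensorProduct.map (antipode R) LinearMap.id

theorem antipodeMul_tmul (x y : A) : antipodeMul (x ⊗ₜ[R] y) = antipode R x * y := rfl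

theorem antipodeMul_mul_tmul (y : A ⊗[R] A) (b c : A) :
    antipodeMul (y * (b ⊗ₜ c)) = antipode R b * antipodeMul y * c := by
  induction y using TensorProduct.induction_on with
  | zero => simp
  | tmul y₁ y₂ =>
    simp only [Algebra.TensorProduct.tmul_mul_tmul, antipodeMul_tmul,
      antipode_mul_antidistrib, mul_assoc]
  | add u v hu hv => simp only [add_mul, map_add, hu, hv, mul_add]

theorem antipodeMul_comul_mul (v : A) (w : A ⊗[R] A) :
    antipodeMul (Coalgebra.comul (R := R) v * w)
      = Coalgebra.counit (R := R) v • antipodeMul w := by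
  induction w using TensorProduct.induction_on with
  | zero => simp
  | tmul b c =>
    have hv : antipodeMul (Coalgebra.comul (R := R) v) = algebraMap R A (Coalgebra.counit v) :=
      mul_antipode_rTensor_comul_apply v
    rw [antipodeMul_mul_tmul, hv, antipodeMul_tmul, Algebra.algebraMap_eq_smul_one,
      mul_smul_comm, smul_mul_assoc, mul_one]
  | add u u' hu hu' => simp only [mul_add, map_add, smul_add, hu, hu']

theorem map_id_antipodeMul_map_id_comul_mul (x : A ⊗[R] A) (q : A ⊗[R] (A ⊗[R] A)) :
    TensorProduct.map LinearMap.id antipodeMul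
        (TensorProduct.map LinearMap.id Coalgebra.comul x * q)
      = (TensorProduct.rid R A (TensorProduct.map LinearMap.id Coalgebra.counit x) ⊗ₜ (1 : A)) *
          TensorProduct.map LinearMap.id antipodeMul q := by
  induction x using TensorProduct.induction_on with
  | zero => simp
  | tmul u v =>
    induction q using TensorProduct.induction_on with
    | zero => simp
    | tmul a w =>
      simp only [TensorProduct.map_tmul, LinearMap.id_coe, id_eq,
        Algebra.TensorProduct.tmul_mul_tmul, TensorProduct.rid_tmul, antipodeMul_comul_mul,
        tmul_smul, smul_tmul', smul_mul_assoc, one_mul]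
    | add q₁ q₂ h₁ h₂ => simp only [mul_add, map_add, h₁, h₂]
  | add x₁ x₂ h₁ h₂ => simp only [map_add, add_mul, h₁, h₂, add_tmul]

theorem map_antipodeMul_id_map_comul_id_mul (x : A ⊗[R] A) (q : (A ⊗[R] A) ⊗[R] A) :
    TensorProduct.map antipodeMul LinearMap.id
        (TensorProduct.map Coalgebra.comul LinearMap.id x * q)
      = ((1 : A) ⊗ₜ TensorProduct.lid R A (TensorProduct.map Coalgebra.counit LinearMap.id x)) *
          TensorProduct.map antipodeMul LinearMap.id q := by
  induction x using TensorProduct.induction_on with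
  | zero => simp
  | tmul u v =>
    induction q using TensorProduct.induction_on with
    | zero => simp
    | tmul w c =>
      simp only [TensorProduct.map_tmul, LinearMap.id_coe, id_eq,
        Algebra.TensorProduct.tmul_mul_tmul, TensorProduct.lid_tmul, antipodeMul_comul_mul,
        one_mul, smul_mul_assoc, smul_tmul]
    | add q₁ q₂ h₁ h₂ => simp only [mul_add, map_add, h₁, h₂]
  | add x₁ x₂ h₁ h₂ => simp only [map_add, add_mul, h₁, h₂, tmul_add]

theorem map_id_antipodeMul_one_tmul_mul_assoc (y z : A ⊗[R] A) :
    TensorProduct.map LinearMap.id antipodeMul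
        (((1 : A) ⊗ₜ y) * TensorProduct.assoc R A A A (z ⊗ₜ (1 : A)))
      = TensorProduct.map LinearMap.id
          (LinearMap.mulRight R (antipodeMul y) ∘ₗ antipode R) z := by
  induction z using TensorProduct.induction_on with
  | zero => simp
  | tmul c d =>
    simp only [TensorProduct.assoc_tmul, Algebra.TensorProduct.tmul_mul_tmul,
      TensorProduct.map_tmul, LinearMap.id_coe, id_eq, LinearMap.comp_apply,
      LinearMap.mulRight_apply, one_mul, antipodeMul_mul_tmul, mul_one]
  | add z₁ z₂ h₁ h₂ => simp only [add_tmul, map_add, mul_add, h₁, h₂]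

theorem map_antipodeMul_id_tmul_one_mul_assoc_symm (y z : A ⊗[R] A) :
    TensorProduct.map antipodeMul LinearMap.id
        ((y ⊗ₜ (1 : A)) * (TensorProduct.assoc R A A A).symm ((1 : A) ⊗ₜ z))
      = TensorProduct.map (LinearMap.mulLeft R (antipodeMul y)) LinearMap.id z := by
  induction z using TensorProduct.induction_on with
  | zero => simp
  | tmul c d =>
    simp only [TensorProduct.assoc_symm_tmul, Algebra.TensorProduct.tmul_mul_tmul,
      TensorProduct.map_tmul, LinearMap.id_coe, id_eq, LinearMap.mulLeft_apply,
      antipodeMul_mul_tmul, antipode_one, one_mul]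
  | add z₁ z₂ h₁ h₂ => simp only [tmul_add, map_add, mul_add, h₁, h₂]

end HopfAlgebra

section

variable {R A B C : Type*} [CommSemiring R] [Semiring A] [Semiring B] [Semiring C]
  [Algebra R A] [Algebra R B] [Algebra R C]

theorem TensorProduct.assoc_mul (x y : (A ⊗[R] B) ⊗[R] C) :
    TensorProduct.assoc R A B C (x * y)
      = TensorProduct.assoc R A B C x * TensorProduct.assoc R A B C y :=
  map_mul (Algebra.TensorProduct.assoc R R R A B C) x y

theorem TensorProduct.assoc_symm_mul (x y : A ⊗[R] (B ⊗[R] C)) :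
    (TensorProduct.assoc R A B C).symm (x * y)
      = (TensorProduct.assoc R A B C).symm x * (TensorProduct.assoc R A B C).symm y :=
  map_mul (Algebra.TensorProduct.assoc R R R A B C).symm x y

end

theorem IsCocycle.assoc_map_comul_id {F Finv : H ⊗[k] H} (hF : IsCocycle k H F Finv) :
    TensorProduct.assoc k H H H (TensorProduct.map (comulL k H) LinearMap.id F)
      = TensorProduct.map LinearMap.id (comulL k H) F *
          (((1 : H) ⊗ₜ F) * TensorProduct.assoc k H H H (Finv ⊗ₜ (1 : H))) := by
  obtain ⟨hFFinv, -, hcocycle, -⟩ := hF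
  calc TensorProduct.assoc k H H H (TensorProduct.map (comulL k H) LinearMap.id F)
      = TensorProduct.assoc k H H H
          (TensorProduct.map (comulL k H) LinearMap.id F * (F ⊗ₜ 1) * (Finv ⊗ₜ 1)) := by
        rw [mul_assoc, Algebra.TensorProduct.tmul_mul_tmul, hFFinv, mul_one,
          ← Algebra.TensorProduct.one_def, mul_one]
    _ = _ := by rw [TensorProduct.assoc_mul, hcocycle, mul_assoc]

theorem IsCocycle.assoc_symm_map_id_comul {F Finv : H ⊗[k] H} (hF : IsCocycle k H F Finv) :
    (TensorProduct.assoc k H H H).symm (TensorProduct.map LinearMap.id (comulL k H) F)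
      = TensorProduct.map (comulL k H) LinearMap.id F *
          ((F ⊗ₜ (1 : H)) * (TensorProduct.assoc k H H H).symm ((1 : H) ⊗ₜ Finv)) := by
  obtain ⟨hFFinv, -, hcocycle, -⟩ := hF
  calc (TensorProduct.assoc k H H H).symm (TensorProduct.map LinearMap.id (comulL k H) F)
      = (TensorProduct.assoc k H H H).symm
          (TensorProduct.map LinearMap.id (comulL k H) F * ((1 : H) ⊗ₜ F) *
            ((1 : H) ⊗ₜ Finv)) := by
        rw [mul_assoc, Algebra.TensorProduct.tmul_mul_tmul, hFFinv, mul_one,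
          ← Algebra.TensorProduct.one_def, mul_one]
    _ = _ := by
        rw [← hcocycle, TensorProduct.assoc_symm_mul, LinearEquiv.symm_apply_apply, mul_assoc]

/-- For a twisting cocycle `F`:
`Σ F₁⁽¹⁾ ⊗ γ(F₁⁽²⁾)F₂ = Σ F̄₁ ⊗ γ(F̄₂)ϑ` and `Σ γ(F₁)F₂⁽¹⁾ ⊗ F₂⁽²⁾ = Σ ϑF̄₁ ⊗ F̄₂`. -/
theorem twist_antipode_identities
    (F Finv : H ⊗[k] H) (hF : IsCocycle k H F Finv) :
    (TensorProduct.map LinearMap.id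
        ((LinearMap.mul' k H) ∘ₗ TensorProduct.map (anti k H) LinearMap.id))
      ((TensorProduct.assoc k H H H) (TensorProduct.map (comulL k H) LinearMap.id F))
      = TensorProduct.map LinearMap.id
          ((LinearMap.mulRight k (theta k H F)) ∘ₗ anti k H) Finv ∧
    (TensorProduct.map
        ((LinearMap.mul' k H) ∘ₗ TensorProduct.map (anti k H) LinearMap.id) LinearMap.id)
      ((TensorProduct.assoc k H H H).symm (TensorProduct.map LinearMap.id (comulL k H) F))
      = TensorProduct.map (LinearMap.mulLeft k (theta k H F)) LinearMap.id Finv := by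
  rw [hF.assoc_map_comul_id, hF.assoc_symm_map_id_comul]
  obtain ⟨-, -, -, hlid, hrid⟩ := hF
  have hθ : theta k H F = HopfAlgebra.antipodeMul F := rfl
  have hψ : LinearMap.mul' k H ∘ₗ TensorProduct.map (anti k H) LinearMap.id
      = HopfAlgebra.antipodeMul := rfl
  rw [hθ, hψ]
  unfold comulL counitL anti at *
  constructor
  · rw [HopfAlgebra.map_id_antipodeMul_map_id_comul_mul, hrid,
      HopfAlgebra.map_id_antipodeMul_one_tmul_mul_assoc, ← Algebra.TensorProduct.one_def, one_mul]
  · rw [HopfAlgebra.map_antipodeMul_id_map_comul_id_mul, hlid,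
      HopfAlgebra.map_antipodeMul_id_tmul_one_mul_assoc_symm, ← Algebra.TensorProduct.one_def,
      one_mul]
end
end

section
/- Let F be a twisting cocycle for the Hopf algebra H and let (E,ρ) be an adjoint H-module algebra. Then the map φ(a) := Σ ad(F₁)(a)·ρ(F₂) intertwines the adjoint actions of H and of the twisted Hopf algebra H̃ on E: for all h ∈ H and a ∈ E, Σ ρ(h⁽¹̃⁾)·φ(a)·ρ(γ̃(h⁽²̃⁾)) = φ( Σ ρ(h⁽¹⁾)·a·ρ(γ(h⁽²⁾)) ). -/
open TensorProduct

noncomputable section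

variable (k : Type*) [Field k] (H : Type*) [Ring H] [HopfAlgebra k H]

variable (A : Type*) [Ring A] [Algebra k A]

/-!
Put `W(x ⊗ y) = Σ x⁽¹⁾ ⊗ γ(x⁽²⁾) y` (`adTensor`), so that `φ(a) = Σ ρ(W(F)₁) · a · ρ(W(F)₂)`.
Applying `x ⊗ y ⊗ z ↦ x ⊗ γ(y) z` to the cocycle identity multiplied on the right by `F⁻¹ ⊗ 1`
gives `W(F) = Σ F̄₁ ⊗ γ(F̄₂) ϑ`, that is `φ(a) = Σ ρ(F̄₁) · a · ρ(γ(F̄₂) ϑ)`. In this form both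
sides of the intertwining identity become `Σ ρ(x) · a · ρ(γ(y) ϑ)`, summed over
`x ⊗ y = F⁻¹ Δ(h)`: on the left `F F⁻¹ = 1` and `ϑ ϑ⁻¹ = 1` cancel, on the right the antipode
reverses products.
-/
open HopfAlgebra Coalgebra LinearMap

section Hopf

variable {R B : Type*} [CommSemiring R] [Semiring B] [HopfAlgebra R B]

lemma mul'_rTensor_antipode_mul_tmul (p : B ⊗[R] B) (c d : B) :
    mul' R B ((antipode R).rTensor B (p * (c ⊗ₜ d))) =
      antipode R c * mul' R B ((antipode R).rTensor B p) * d := by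
  induction p using TensorProduct.induction_on with
  | zero => simp
  | tmul x y => simp [antipode_mul_antidistrib, mul_assoc]
  | add p q hp hq => simp only [add_mul, map_add, hp, hq, mul_add]

variable (R B) in
def adTensor : B ⊗[R] B →ₗ[R] B ⊗[R] B :=
  (mul' R B ∘ₗ (antipode R).rTensor B).lTensor B ∘ₗ
    (TensorProduct.assoc R B B B).toLinearMap ∘ₗ (comul (R := R)).rTensor B

lemma adTensor_tmul (x y : B) :
    adTensor R B (x ⊗ₜ y) = (mulRight R y ∘ₗ antipode R).lTensor B (comul x) := by
  simp only [adTensor, coe_comp, LinearEquiv.coe_coe, Function.comp_apply, rTensor_tmul]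
  induction comul (R := R) x using TensorProduct.induction_on with
  | zero => simp
  | tmul p q => simp
  | add p q hp hq => simp only [TensorProduct.add_tmul, map_add, hp, hq]

lemma lTensor_mul'_rTensor_antipode_mul_assoc {X : B ⊗[R] (B ⊗[R] B)} {t : B}
    (hX : (mul' R B ∘ₗ (antipode R).rTensor B).lTensor B X = 1 ⊗ₜ t) (u : B ⊗[R] B) :
    (mul' R B ∘ₗ (antipode R).rTensor B).lTensor B
        (X * TensorProduct.assoc R B B B (u ⊗ₜ 1)) =
      (mulRight R t ∘ₗ antipode R).lTensor B u := by
  have hpure (Y : B ⊗[R] (B ⊗[R] B)) (c d : B) :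
      (mul' R B ∘ₗ (antipode R).rTensor B).lTensor B (Y * (c ⊗ₜ (d ⊗ₜ 1))) =
        (1 ⊗ₜ antipode R d) * (mul' R B ∘ₗ (antipode R).rTensor B).lTensor B Y * (c ⊗ₜ 1) := by
    induction Y using TensorProduct.induction_on with
    | zero => simp
    | tmul x w => simp [mul'_rTensor_antipode_mul_tmul]
    | add Y Z hY hZ => simp only [add_mul, map_add, hY, hZ, mul_add]
  induction u using TensorProduct.induction_on with
  | zero => simp
  | tmul c d => simp [hpure, hX]
  | add u v hu hv => simp only [TensorProduct.add_tmul, map_add, mul_add, hu, hv]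

lemma lTensor_mul'_rTensor_antipode_lTensor_comul_mul (u v : B ⊗[R] B) :
    (mul' R B ∘ₗ (antipode R).rTensor B).lTensor B ((comul (R := R)).lTensor B u * (1 ⊗ₜ v)) =
      TensorProduct.rid R B ((counit (R := R)).lTensor B u) ⊗ₜ
        mul' R B ((antipode R).rTensor B v) := by
  induction u using TensorProduct.induction_on with
  | zero => simp
  | tmul x y =>
    induction v using TensorProduct.induction_on with
    | zero => simp
    | tmul c d =>
      simp only [lTensor_tmul, Algebra.TensorProduct.tmul_mul_tmul, mul_one, coe_comp,
        Function.comp_apply, mul'_rTensor_antipode_mul_tmul, mul_antipode_rTensor_comul_apply,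
        TensorProduct.rid_tmul, rTensor_tmul, mul'_apply]
      rw [← Algebra.commutes, mul_assoc, ← Algebra.smul_def,
        TensorProduct.tmul_smul, TensorProduct.smul_tmul']
    | add v w hv hw => simp only [TensorProduct.tmul_add, mul_add, map_add, hv, hw]
  | add u w hu hw => simp only [map_add, add_mul, TensorProduct.add_tmul, hu, hw]

end Hopf

section Cocycle

variable {k H}

lemma adTensor_eq_of_isCocycle {F Finv : H ⊗[k] H} (hF : IsCocycle k H F Finv) :
    adTensor k H F = (mulRight k (theta k H F) ∘ₗ antipode k).lTensor H Finv := by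
  obtain ⟨hFFinv, -, hcocycle, -, hcounit⟩ := hF
  set Ψ := (mul' k H ∘ₗ (antipode k).rTensor H).lTensor H
  set α := Algebra.TensorProduct.assoc k k k H H H
  have hΨ : Ψ ((comul (R := k)).lTensor H F * (1 ⊗ₜ F)) = 1 ⊗ₜ theta k H F := by
    rw [lTensor_mul'_rTensor_antipode_lTensor_comul_mul]
    exact congrArg (· ⊗ₜ[k] theta k H F) hcounit
  calc adTensor k H F = Ψ (α ((comul (R := k)).rTensor H F * (F ⊗ₜ 1)) * α (Finv ⊗ₜ 1)) := by
        rw [← map_mul, mul_assoc, Algebra.TensorProduct.tmul_mul_tmul, hFFinv, one_mul,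
          ← Algebra.TensorProduct.one_def, mul_one]
        rfl
    _ = Ψ ((comul (R := k)).lTensor H F * (1 ⊗ₜ F) * α (Finv ⊗ₜ 1)) :=
        congrArg (fun X ↦ Ψ (X * α (Finv ⊗ₜ 1))) hcocycle
    _ = _ := lTensor_mul'_rTensor_antipode_mul_assoc hΨ Finv

end Cocycle

section Sandwich

variable {k H} {E : Type*} [Ring E] [Algebra k E]

@[simp]
lemma sandwich_tmul (α β : H →ₗ[k] E) (x y : H) (a : E) :
    sandwich k H α β (x ⊗ₜ y) a = α x * a * β y := by
  simp [sandwich, bcomp, mul_assoc]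

lemma sandwich_lTensor (α β : H →ₗ[k] E) (f : H →ₗ[k] H) (u : H ⊗[k] H) :
    sandwich k H α β (f.lTensor H u) = sandwich k H α (β ∘ₗ f) u := by
  induction u using TensorProduct.induction_on with
  | zero => simp
  | tmul x y => ext a; simp
  | add u v hu hv => simp only [map_add, hu, hv]

lemma sandwich_apply_mul (α β : H →ₗ[k] E) (u : H ⊗[k] H) (a e : E) :
    sandwich k H α β u a * e = sandwich k H α (mulRight k e ∘ₗ β) u a := by
  induction u using TensorProduct.induction_on with
  | zero => simp
  | tmul x y => simp [mul_assoc]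
  | add u v hu hv => simp only [map_add, LinearMap.add_apply, add_mul, hu, hv]

lemma sandwich_apply_sandwich (ρ : H →ₐ[k] E) {β₁ β₂ β : H →ₗ[k] E}
    (hβ : ∀ x y, β₂ x * β₁ y = β (y * x)) (u v : H ⊗[k] H) (a : E) :
    sandwich k H ρ.toLinearMap β₁ u (sandwich k H ρ.toLinearMap β₂ v a) =
      sandwich k H ρ.toLinearMap β (u * v) a := by
  induction u using TensorProduct.induction_on with
  | zero => simp
  | tmul x y =>
    induction v using TensorProduct.induction_on with
    | zero => simp
    | tmul c d => simp [← hβ, mul_assoc]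
    | add v w hv hw => simp only [map_add, LinearMap.add_apply, mul_add, hv, hw]
  | add u w hu hw => simp only [map_add, LinearMap.add_apply, add_mul, hu, hw]

lemma lift_adAct_apply (ρ : H →ₐ[k] E) (u : H ⊗[k] H) (a : E) :
    TensorProduct.lift ((bcomp k H ((LinearMap.mul k E).flip ∘ₗ ρ.toLinearMap)
        (adAct k H ρ.toLinearMap)).flip) u a =
      sandwich k H ρ.toLinearMap ρ.toLinearMap (adTensor k H u) a := by
  induction u using TensorProduct.induction_on with
  | zero => simp
  | tmul x y =>
    have hρ : ρ.toLinearMap ∘ₗ (mulRight k y ∘ₗ antipode k) =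
        mulRight k (ρ y) ∘ₗ ρ.toLinearMap ∘ₗ anti k H := by
      ext z; simp [anti]
    calc _ = sandwich k H ρ.toLinearMap (ρ.toLinearMap ∘ₗ anti k H) (comul x) a * ρ y := rfl
      _ = _ := by rw [sandwich_apply_mul, ← hρ, adTensor_tmul, sandwich_lTensor]
  | add u v hu hv => simp only [map_add, LinearMap.add_apply, hu, hv]

end Sandwich

theorem cotwist_phi_intertwines
    (F Finv : H ⊗[k] H) (hF : IsCocycle k H F Finv)
    (ϑinv : H) (hϑ1 : theta k H F * ϑinv = 1)
    (E : Type*) [Ring E] [Algebra k E] (ρ : H →ₐ[k] E)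
    (φ : E →ₗ[k] E)
    (hφ : φ = TensorProduct.lift
      ((bcomp k H ((LinearMap.mul k E).flip ∘ₗ ρ.toLinearMap) (adAct k H ρ.toLinearMap)).flip) F) :
    ∀ (h : H) (a : E),
      ((sandwich k H ρ.toLinearMap
          (ρ.toLinearMap ∘ₗ antiTw k H (theta k H F) ϑinv)) ∘ₗ (comulTw k H F Finv)) h (φ a)
      = φ ((adAct k H ρ.toLinearMap) h a) := by
  intro h a
  set ϑ := theta k H F
  set β := ρ.toLinearMap ∘ₗ mulRight k ϑ ∘ₗ antipode k
  have hφβ (b : E) : φ b = sandwich k H ρ.toLinearMap β Finv b := by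
    rw [hφ, lift_adAct_apply, adTensor_eq_of_isCocycle hF, sandwich_lTensor]
  have hβ_antiTw (x y : H) : β x * (ρ.toLinearMap ∘ₗ antiTw k H ϑ ϑinv) y = β (y * x) := by
    simp [β, antiTw, anti, antipode_mul_antidistrib, ← map_mul, mul_assoc, ← mul_assoc ϑ, hϑ1]
  have hβ_anti (x y : H) : (ρ.toLinearMap ∘ₗ anti k H) x * β y = β (y * x) := by
    simp [β, anti, antipode_mul_antidistrib, ← map_mul, mul_assoc]
  calc _ = sandwich k H ρ.toLinearMap (ρ.toLinearMap ∘ₗ antiTw k H ϑ ϑinv)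
        (Finv * comul h * F) (sandwich k H ρ.toLinearMap β Finv a) := by rw [hφβ]; rfl
    _ = sandwich k H ρ.toLinearMap β (Finv * comul h) a := by
        rw [sandwich_apply_sandwich ρ hβ_antiTw, mul_assoc _ F, hF.1, mul_one]
    _ = sandwich k H ρ.toLinearMap β Finv
        (sandwich k H ρ.toLinearMap (ρ.toLinearMap ∘ₗ anti k H) (comul h) a) :=
        (sandwich_apply_sandwich ρ hβ_anti _ _ _).symm
    _ = _ := by rw [hφβ]; rfl
end
end

section
/- Let H be a triangular Hopf algebra with R-matrix R and let A be a left H-module algebra. Define the R-commutator [a,b]_R := ab − Σ (R₂•b)(R₁•a) for a,b ∈ A. Then [·,·]_R is H-equivariant (h•[a,b]_R = Σ [h⁽¹⁾•a, h⁽²⁾•b]_R for all h ∈ H), satisfies the braided Jacobi identity [a,[b,c]_R]_R = [[a,b]_R,c]_R + Σ [R₂•b,[R₁•a,c]_R]_R, and the braided antisymmetry Σ [R₂•a, R₁•b]_R = −[b,a]_R, for all a,b,c ∈ A. -/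
/-! The braiding `c (a ⊗ b) = Σ R₂•b ⊗ R₁•a` is an involution because `R₂₁R = 1`, and it commutes
with the `H`-action on `A ⊗ A` because `RΔ = ΔᵒᵖR`. The hexagon `(id⊗Δ)(R) = R₁₃R₁₂` identifies the
braiding of `A` with the `H`-module `A ⊗ A` with `(id⊗c)(c⊗id)`; since that braiding is natural with
respect to `H`-linear maps, applying it to `m : A ⊗ A → A` and to `c` itself shows that `c` is
compatible with multiplication and satisfies the Yang–Baxter equation. The `R`-commutator is
`m ∘ (1 - c)`: equivariance and antisymmetry are then immediate, and every term of the Jacobi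
identity becomes `m ∘ (id⊗m)` followed by a polynomial in `c₁ = c⊗id` and `c₂ = id⊗c`, which
reduces the identity to `(1 - c₂c₁)(1 - c₂) = (1 - c₁c₂)(1 - c₁) + (1 - c₂c₁)(1 - c₂)c₁`, valid
whenever `c₁² = 1` and `c₁c₂c₁ = c₂c₁c₂`. -/

open TensorProduct

noncomputable section

variable (k : Type*) [Field k] (H : Type*) [Ring H] [HopfAlgebra k H]

variable (A : Type*) [Ring A] [Algebra k A]

section RCommutator

variable (act : H →ₗ[k] Module.End k A) (R : H ⊗[k] H)

/-- The `R`-commutator `[a,b]_R = ab − Σ (R₂•b)(R₁•a)` as a linear map on `A ⊗ A`. -/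
noncomputable def rBracket : A ⊗[k] A →ₗ[k] A :=
  (LinearMap.mul' k A) -
    ((LinearMap.mul' k A) ∘ₗ ((pairAct k H act) ((TensorProduct.comm k H H) R)) ∘ₗ
      (TensorProduct.comm k A A).toLinearMap)

end RCommutator

end

theorem one_sub_mul_one_sub_of_braid_relation {S : Type*} [Ring S] {s t : S} (hs : s * s = 1)
    (hst : s * t * s = t * s * t) :
    (1 - t * s) * (1 - t) = (1 - s * t) * (1 - s) + (1 - t * s) * (1 - t) * s := by
  have htsts : t * s * t * s = s * t := by rw [← hst, mul_assoc, hs, mul_one]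
  have htss : t * s * s = t := by rw [mul_assoc, hs, mul_one]
  simp only [mul_sub, sub_mul, one_mul, mul_one, htsts, htss, hst]
  abel

theorem LinearMap.mul'_comp_rTensor_mul'_comp_assoc_symm (k A : Type*) [CommRing k] [Ring A]
    [Algebra k A] :
    LinearMap.mul' k A ∘ₗ (LinearMap.mul' k A).rTensor A ∘ₗ
        (TensorProduct.assoc k A A A).symm.toLinearMap
      = LinearMap.mul' k A ∘ₗ (LinearMap.mul' k A).lTensor A := by
  ext a b c
  simp [mul_assoc]

namespace TensorProduct

section BraidedCommutator

variable {k V : Type*} [CommRing k] [AddCommGroup V] [Module k V]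

local notation "α⁻¹" => LinearEquiv.toLinearMap (LinearEquiv.symm (TensorProduct.assoc k V V V))

def braidLeft (c : Module.End k (V ⊗[k] V)) : Module.End k (V ⊗[k] (V ⊗[k] V)) :=
  (TensorProduct.assoc k V V V).conj (c.rTensor V)

def braidedCommutator (m : V ⊗[k] V →ₗ[k] V) (c : Module.End k (V ⊗[k] V)) : V ⊗[k] V →ₗ[k] V :=
  m - m ∘ₗ c

theorem braidLeft_add (c c' : Module.End k (V ⊗[k] V)) :
    braidLeft (c + c') = braidLeft c + braidLeft c' := by
  simp [braidLeft, LinearMap.rTensor_add]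

variable {m : V ⊗[k] V →ₗ[k] V} {c : Module.End k (V ⊗[k] V)}

theorem braidLeft_mul_self (hc : c * c = 1) : braidLeft c * braidLeft c = 1 := by
  rw [braidLeft, Module.End.mul_eq_comp, ← LinearEquiv.conj_comp, ← LinearMap.rTensor_comp,
    ← Module.End.mul_eq_comp, hc, Module.End.one_eq_id, LinearMap.rTensor_id, LinearEquiv.conj_id]
  rfl

theorem lTensor_mul_self (hc : c * c = 1) : c.lTensor V * c.lTensor V = 1 := by
  rw [← LinearMap.lTensor_mul, hc, Module.End.one_eq_id, LinearMap.lTensor_id]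
  rfl

theorem assoc_symm_comp_braidLeft : α⁻¹ ∘ₗ braidLeft c = c.rTensor V ∘ₗ α⁻¹ := by
  ext x y z
  simp [braidLeft]

theorem braidedCommutator_comp_self (hc : c * c = 1) :
    braidedCommutator m c ∘ₗ c = -braidedCommutator m c := by
  rw [braidedCommutator, LinearMap.sub_comp, LinearMap.comp_assoc, ← Module.End.mul_eq_comp c c,
    hc, Module.End.one_eq_id, LinearMap.comp_id, neg_sub]

theorem braidedCommutator_comp_eq_comp {f : Module.End k V} {g : Module.End k (V ⊗[k] V)}
    (hm : m ∘ₗ g = f ∘ₗ m) (hc : c ∘ₗ g = g ∘ₗ c) :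
    braidedCommutator m c ∘ₗ g = f ∘ₗ braidedCommutator m c := by
  rw [braidedCommutator, LinearMap.sub_comp, LinearMap.comp_sub, LinearMap.comp_assoc, hc,
    ← LinearMap.comp_assoc, hm, LinearMap.comp_assoc]

theorem comp_rTensor_of_comp_lTensor (hc : c * c = 1)
    (hnat : c ∘ₗ m.lTensor V = m.rTensor V ∘ₗ α⁻¹ ∘ₗ (c.lTensor V * braidLeft c)) :
    c ∘ₗ m.rTensor V ∘ₗ α⁻¹ = m.lTensor V ∘ₗ (braidLeft c * c.lTensor V) := by
  have hm : m.lTensor V = c ∘ₗ m.rTensor V ∘ₗ α⁻¹ ∘ₗ (c.lTensor V * braidLeft c) := by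
    rw [← hnat, ← LinearMap.comp_assoc, ← Module.End.mul_eq_comp, hc, Module.End.one_eq_id,
      LinearMap.id_comp]
  have hinv : c.lTensor V * braidLeft c * (braidLeft c * c.lTensor V) = 1 := by
    rw [mul_assoc, ← mul_assoc (braidLeft c), braidLeft_mul_self hc, one_mul, lTensor_mul_self hc]
  rw [hm]
  simp only [LinearMap.comp_assoc]
  rw [← Module.End.mul_eq_comp, hinv, Module.End.one_eq_id, LinearMap.comp_id]

theorem lTensor_braidedCommutator :
    (braidedCommutator m c).lTensor V = m.lTensor V ∘ₗ (1 - c.lTensor V) := by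
  rw [braidedCommutator, LinearMap.lTensor_sub, LinearMap.lTensor_comp, LinearMap.comp_sub,
    Module.End.one_eq_id, LinearMap.comp_id]

theorem rTensor_braidedCommutator_comp_assoc_symm :
    (braidedCommutator m c).rTensor V ∘ₗ α⁻¹ = m.rTensor V ∘ₗ α⁻¹ ∘ₗ (1 - braidLeft c) := by
  rw [braidedCommutator, LinearMap.rTensor_sub, LinearMap.rTensor_comp, LinearMap.comp_sub,
    Module.End.one_eq_id, LinearMap.comp_id, LinearMap.comp_sub, assoc_symm_comp_braidLeft,
    LinearMap.sub_comp, LinearMap.comp_assoc]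

theorem braidedCommutator_comp_lTensor (hassoc : m ∘ₗ m.rTensor V ∘ₗ α⁻¹ = m ∘ₗ m.lTensor V)
    (hnat : c ∘ₗ m.lTensor V = m.rTensor V ∘ₗ α⁻¹ ∘ₗ (c.lTensor V * braidLeft c)) :
    braidedCommutator m c ∘ₗ m.lTensor V
      = (m ∘ₗ m.lTensor V) ∘ₗ (1 - c.lTensor V * braidLeft c) := by
  rw [braidedCommutator, LinearMap.sub_comp, LinearMap.comp_assoc, hnat, ← hassoc,
    LinearMap.comp_sub, Module.End.one_eq_id, LinearMap.comp_id]
  simp only [LinearMap.comp_assoc]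

theorem braidedCommutator_comp_rTensor (hassoc : m ∘ₗ m.rTensor V ∘ₗ α⁻¹ = m ∘ₗ m.lTensor V)
    (hc : c * c = 1)
    (hnat : c ∘ₗ m.lTensor V = m.rTensor V ∘ₗ α⁻¹ ∘ₗ (c.lTensor V * braidLeft c)) :
    braidedCommutator m c ∘ₗ m.rTensor V ∘ₗ α⁻¹
      = (m ∘ₗ m.lTensor V) ∘ₗ (1 - braidLeft c * c.lTensor V) := by
  rw [braidedCommutator, LinearMap.sub_comp, LinearMap.comp_assoc,
    comp_rTensor_of_comp_lTensor hc hnat, hassoc, LinearMap.comp_sub, Module.End.one_eq_id,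
    LinearMap.comp_id]
  simp only [LinearMap.comp_assoc]

theorem braidedCommutator_jacobi (hassoc : m ∘ₗ m.rTensor V ∘ₗ α⁻¹ = m ∘ₗ m.lTensor V)
    (hc : c * c = 1)
    (hybe : braidLeft c * c.lTensor V * braidLeft c = c.lTensor V * braidLeft c * c.lTensor V)
    (hnat : c ∘ₗ m.lTensor V = m.rTensor V ∘ₗ α⁻¹ ∘ₗ (c.lTensor V * braidLeft c)) :
    braidedCommutator m c ∘ₗ (braidedCommutator m c).lTensor V
      = braidedCommutator m c ∘ₗ (braidedCommutator m c).rTensor V ∘ₗ α⁻¹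
        + braidedCommutator m c ∘ₗ (braidedCommutator m c).lTensor V ∘ₗ braidLeft c := by
  simp only [lTensor_braidedCommutator, rTensor_braidedCommutator_comp_assoc_symm,
    ← LinearMap.comp_assoc, braidedCommutator_comp_lTensor hassoc hnat,
    braidedCommutator_comp_rTensor hassoc hc hnat]
  simp only [LinearMap.comp_assoc, ← Module.End.mul_eq_comp, ← LinearMap.comp_add]
  exact congrArg (m ∘ₗ m.lTensor V ∘ₗ ·)
    (one_sub_mul_one_sub_of_braid_relation (braidLeft_mul_self hc) hybe)

theorem braidedCommutator_jacobi_apply (hassoc : m ∘ₗ m.rTensor V ∘ₗ α⁻¹ = m ∘ₗ m.lTensor V)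
    (hc : c * c = 1)
    (hybe : braidLeft c * c.lTensor V * braidLeft c = c.lTensor V * braidLeft c * c.lTensor V)
    (hnat : c ∘ₗ m.lTensor V = m.rTensor V ∘ₗ α⁻¹ ∘ₗ (c.lTensor V * braidLeft c)) (a b z : V) :
    braidedCommutator m c (a ⊗ₜ braidedCommutator m c (b ⊗ₜ z))
      = braidedCommutator m c (braidedCommutator m c (a ⊗ₜ b) ⊗ₜ z)
        + braidedCommutator m c
            (map LinearMap.id (((mk k V V).compr₂ (braidedCommutator m c)).flip z)
              (c (a ⊗ₜ b))) := by
  have hz : ∀ w : V ⊗[k] V,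
      (braidedCommutator m c).lTensor V (TensorProduct.assoc k V V V (w ⊗ₜ z))
        = map LinearMap.id (((mk k V V).compr₂ (braidedCommutator m c)).flip z) w := by
    intro w
    induction w using TensorProduct.induction_on with
    | zero => simp
    | tmul x y => simp
    | add x y hx hy => simp only [add_tmul, map_add, hx, hy]
  simpa [braidLeft, hz] using
    LinearMap.congr_fun (braidedCommutator_jacobi hassoc hc hybe hnat) (a ⊗ₜ (b ⊗ₜ z))

end BraidedCommutator

section Braiding

variable {k H H' M N N' : Type*} [CommRing k] [Ring H] [Algebra k H] [Ring H'] [Algebra k H']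
  [AddCommGroup M] [Module k M] [AddCommGroup N] [Module k N] [AddCommGroup N'] [Module k N']

def tensorAction (ρ : H →ₐ[k] Module.End k M) (σ : H' →ₐ[k] Module.End k N) :
    H ⊗[k] H' →ₐ[k] Module.End k (M ⊗[k] N) :=
  Module.endTensorEndAlgHom.comp (Algebra.TensorProduct.map ρ σ)

def braiding (ρ : H →ₐ[k] Module.End k M) (σ : H' →ₐ[k] Module.End k N) (R : H ⊗[k] H') :
    M ⊗[k] N →ₗ[k] N ⊗[k] M :=
  tensorAction σ ρ (Algebra.TensorProduct.comm k H H' R) ∘ₗ TensorProduct.comm k M N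

variable (ρ : H →ₐ[k] Module.End k M) (σ : H' →ₐ[k] Module.End k N)

@[simp]
theorem tensorAction_tmul (x : H) (y : H') : tensorAction ρ σ (x ⊗ₜ y) = map (ρ x) (σ y) := rfl

@[simp]
theorem braiding_tmul_apply (x : H) (y : H') (m : M) (n : N) :
    braiding ρ σ (x ⊗ₜ y) (m ⊗ₜ n) = σ y n ⊗ₜ ρ x m := rfl

@[simp]
theorem braiding_zero : braiding ρ σ 0 = 0 := by simp [braiding]

@[simp]
theorem braiding_add (R R' : H ⊗[k] H') :
    braiding ρ σ (R + R') = braiding ρ σ R + braiding ρ σ R' := by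
  simp [braiding, LinearMap.add_comp]

theorem comm_comp_tensorAction (x : H ⊗[k] H') :
    (TensorProduct.comm k M N).toLinearMap ∘ₗ tensorAction ρ σ x
      = tensorAction σ ρ (Algebra.TensorProduct.comm k H H' x) ∘ₗ TensorProduct.comm k M N := by
  induction x using TensorProduct.induction_on with
  | zero => simp
  | tmul x y => ext m n; simp
  | add x y hx hy => simp only [map_add, LinearMap.comp_add, LinearMap.add_comp, hx, hy]

theorem braiding_comp_tensorAction (R x : H ⊗[k] H') :
    braiding ρ σ R ∘ₗ tensorAction ρ σ x = braiding ρ σ (R * x) := by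
  rw [braiding, braiding, LinearMap.comp_assoc, comm_comp_tensorAction, ← LinearMap.comp_assoc,
    ← Module.End.mul_eq_comp, ← map_mul, ← map_mul]

theorem tensorAction_comp_braiding (R : H ⊗[k] H') (y : H' ⊗[k] H) :
    tensorAction σ ρ y ∘ₗ braiding ρ σ R
      = braiding ρ σ (Algebra.TensorProduct.comm k H' H y * R) := by
  have hy : Algebra.TensorProduct.comm k H H' (Algebra.TensorProduct.comm k H' H y * R)
      = y * Algebra.TensorProduct.comm k H H' R := by
    rw [map_mul]
    exact congrArg (· * _) (TensorProduct.comm_comm k H H' y)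
  rw [braiding, braiding, hy, map_mul, Module.End.mul_eq_comp, LinearMap.comp_assoc]

theorem braiding_comp_lTensor {σ' : H' →ₐ[k] Module.End k N'} {f : N →ₗ[k] N'}
    (hf : ∀ h, f ∘ₗ σ h = σ' h ∘ₗ f) (R : H ⊗[k] H') :
    braiding ρ σ' R ∘ₗ f.lTensor M = f.rTensor M ∘ₗ braiding ρ σ R := by
  induction R using TensorProduct.induction_on with
  | zero => simp
  | tmul x y =>
    ext m n
    simpa using congrArg (· ⊗ₜ[k] ρ x m) (LinearMap.congr_fun (hf y) n).symm
  | add x y hx hy => simp only [braiding_add, LinearMap.add_comp, LinearMap.comp_add, hx, hy]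

theorem braiding_algHom_comp {H'' : Type*} [Ring H''] [Algebra k H''] (φ : H'' →ₐ[k] H')
    (R : H ⊗[k] H'') : braiding ρ (σ.comp φ) R = braiding ρ σ (φ.toLinearMap.lTensor H R) := by
  induction R using TensorProduct.induction_on with
  | zero => simp
  | tmul x y => ext m n; simp
  | add x y hx hy => simp only [braiding_add, map_add, hx, hy]

theorem braiding_comp_braiding (R : H ⊗[k] H') (S : H' ⊗[k] H) :
    braiding σ ρ S ∘ₗ braiding ρ σ R
      = tensorAction ρ σ (Algebra.TensorProduct.comm k H' H S * R) := by
  calc braiding σ ρ S ∘ₗ braiding ρ σ R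
      = tensorAction ρ σ (Algebra.TensorProduct.comm k H' H S) ∘ₗ
          ((TensorProduct.comm k N M).toLinearMap ∘ₗ
            tensorAction σ ρ (Algebra.TensorProduct.comm k H H' R)) ∘ₗ
          TensorProduct.comm k M N := rfl
    _ = tensorAction ρ σ (Algebra.TensorProduct.comm k H' H S * R) := by
      rw [comm_comp_tensorAction, LinearMap.comp_assoc, TensorProduct.comm_comp_comm,
        LinearMap.comp_id, ← Module.End.mul_eq_comp, ← map_mul]
      congr 2
      exact TensorProduct.comm_comm k H' H R

theorem braiding_hexagon (u v : H ⊗[k] H) :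
    braiding ρ (tensorAction ρ ρ) ((mk k H H 1).lTensor H u * TensorProduct.assoc k H H H (v ⊗ₜ 1))
      = (TensorProduct.assoc k M M M).symm.toLinearMap ∘ₗ
          ((braiding ρ ρ u).lTensor M * braidLeft (braiding ρ ρ v)) := by
  induction u using TensorProduct.induction_on with
  | zero => simp
  | add u u' hu hu' =>
    rw [map_add, add_mul, braiding_add, hu, hu', braiding_add, LinearMap.lTensor_add, add_mul,
      LinearMap.comp_add]
  | tmul x y =>
    induction v using TensorProduct.induction_on with
    | zero => simp [braidLeft]
    | add v v' hv hv' =>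
      rw [add_tmul, map_add, mul_add, braiding_add, hv, hv', braiding_add, braidLeft_add, mul_add,
        LinearMap.comp_add]
    | tmul x' y' =>
      ext a b c
      simp [braidLeft, Algebra.TensorProduct.tmul_mul_tmul, Module.End.mul_apply]

end Braiding

section Triangular

variable {k H M A : Type*} [CommRing k] [Ring H] [Bialgebra k H] [AddCommGroup M] [Module k M]
  [Ring A] [Algebra k A] {R : H ⊗[k] H}

def diagonalAction (ρ : H →ₐ[k] Module.End k M) : H →ₐ[k] Module.End k (M ⊗[k] M) :=
  (tensorAction ρ ρ).comp (Bialgebra.comulAlgHom k H)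

theorem braiding_mul_self (ρ : H →ₐ[k] Module.End k M)
    (hsym : Algebra.TensorProduct.comm k H H R * R = 1) :
    braiding ρ ρ R * braiding ρ ρ R = 1 := by
  rw [Module.End.mul_eq_comp, braiding_comp_braiding, hsym, map_one]

theorem braiding_comp_diagonalAction (ρ : H →ₐ[k] Module.End k M)
    (hcom : ∀ h : H,
      R * Coalgebra.comul h = Algebra.TensorProduct.comm k H H (Coalgebra.comul h) * R)
    (h : H) : braiding ρ ρ R ∘ₗ diagonalAction ρ h = diagonalAction ρ h ∘ₗ braiding ρ ρ R := by
  rw [diagonalAction, AlgHom.comp_apply, braiding_comp_tensorAction, tensorAction_comp_braiding,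
    Bialgebra.comulAlgHom_apply, hcom]

theorem braiding_diagonalAction (ρ : H →ₐ[k] Module.End k M)
    (hhex : (Coalgebra.comul (R := k)).lTensor H R
      = (mk k H H 1).lTensor H R * TensorProduct.assoc k H H H (R ⊗ₜ 1)) :
    braiding ρ (diagonalAction ρ) R = (TensorProduct.assoc k M M M).symm.toLinearMap ∘ₗ
      ((braiding ρ ρ R).lTensor M * braidLeft (braiding ρ ρ R)) := by
  rw [diagonalAction, braiding_algHom_comp, Bialgebra.toLinearMap_comulAlgHom, hhex,
    braiding_hexagon]

theorem braiding_yangBaxter (ρ : H →ₐ[k] Module.End k M)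
    (hcom : ∀ h : H,
      R * Coalgebra.comul h = Algebra.TensorProduct.comm k H H (Coalgebra.comul h) * R)
    (hhex : (Coalgebra.comul (R := k)).lTensor H R
      = (mk k H H 1).lTensor H R * TensorProduct.assoc k H H H (R ⊗ₜ 1)) :
    braidLeft (braiding ρ ρ R) * (braiding ρ ρ R).lTensor M * braidLeft (braiding ρ ρ R)
      = (braiding ρ ρ R).lTensor M * braidLeft (braiding ρ ρ R) * (braiding ρ ρ R).lTensor M := by
  set c := braiding ρ ρ R
  have hnat := braiding_comp_lTensor ρ (diagonalAction ρ) (f := c)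
    (braiding_comp_diagonalAction ρ hcom) R
  rw [braiding_diagonalAction ρ hhex] at hnat
  calc braidLeft c * c.lTensor M * braidLeft c
      = (TensorProduct.assoc k M M M).toLinearMap ∘ₗ c.rTensor M ∘ₗ
          (TensorProduct.assoc k M M M).symm.toLinearMap ∘ₗ (c.lTensor M * braidLeft c) := by
        rw [mul_assoc, braidLeft, LinearEquiv.conj_apply, Module.End.mul_eq_comp]
        simp only [LinearMap.comp_assoc]
    _ = c.lTensor M * braidLeft c * c.lTensor M := by
        rw [← hnat, ← LinearMap.comp_assoc, ← LinearMap.comp_assoc, LinearEquiv.comp_symm,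
          LinearMap.id_comp]
        rfl

theorem braiding_comp_lTensor_mul' (ρ : H →ₐ[k] Module.End k A)
    (hmod : ∀ h, LinearMap.mul' k A ∘ₗ diagonalAction ρ h = ρ h ∘ₗ LinearMap.mul' k A)
    (hhex : (Coalgebra.comul (R := k)).lTensor H R
      = (mk k H H 1).lTensor H R * TensorProduct.assoc k H H H (R ⊗ₜ 1)) :
    braiding ρ ρ R ∘ₗ (LinearMap.mul' k A).lTensor A
      = (LinearMap.mul' k A).rTensor A ∘ₗ (TensorProduct.assoc k A A A).symm.toLinearMap ∘ₗ
          ((braiding ρ ρ R).lTensor A * braidLeft (braiding ρ ρ R)) := by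
  rw [braiding_comp_lTensor ρ (diagonalAction ρ) hmod, braiding_diagonalAction ρ hhex]

end Triangular

end TensorProduct

theorem pairAct_toLinearMap {k H M : Type*} [Field k] [Ring H] [HopfAlgebra k H] [AddCommGroup M]
    [Module k M] (ρ : H →ₐ[k] Module.End k M) :
    pairAct k H ρ.toLinearMap = (tensorAction ρ ρ).toLinearMap :=
  TensorProduct.ext' fun x y ↦ by simp [pairAct]

theorem rBracket_eq_braidedCommutator {k H A : Type*} [Field k] [Ring H] [HopfAlgebra k H] [Ring A]
    [Algebra k A] (ρ : H →ₐ[k] Module.End k A) (R : H ⊗[k] H) :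
    rBracket k H A ρ.toLinearMap R = braidedCommutator (LinearMap.mul' k A) (braiding ρ ρ R) := by
  rw [rBracket, pairAct_toLinearMap]
  rfl

section RCommutator

variable (k : Type*) [Field k] (H : Type*) [Ring H] [HopfAlgebra k H]
variable (A : Type*) [Ring A] [Algebra k A]
variable (act : H →ₗ[k] Module.End k A) (R : H ⊗[k] H)

/-- For a triangular Hopf algebra `H` and an `H`-module algebra `A`,
the `R`-commutator is `H`-equivariant, satisfies the braided Jacobi identity and the
braided antisymmetry. -/
theorem rCommutator_is_HLie
    (Rinv : H ⊗[k] H) (hR : IsTriangular k H R Rinv)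
    (hact : IsModAlg k H A act) :
    (∀ (h : H) (a b : A),
      act h (rBracket k H A act R (a ⊗ₜ b))
        = rBracket k H A act R ((pairAct k H act) (comulL k H h) (a ⊗ₜ b))) ∧
    (∀ a b c : A,
      rBracket k H A act R (a ⊗ₜ rBracket k H A act R (b ⊗ₜ c))
        = rBracket k H A act R (rBracket k H A act R (a ⊗ₜ b) ⊗ₜ c) +
          rBracket k H A act R
            ((TensorProduct.map LinearMap.id
                (((TensorProduct.mk k A A).compr₂ (rBracket k H A act R)).flip c))
              ((pairAct k H act) ((TensorProduct.comm k H H) R) (b ⊗ₜ a)))) ∧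
    (∀ a b : A,
      rBracket k H A act R ((pairAct k H act) ((TensorProduct.comm k H H) R) (a ⊗ₜ b))
        = - rBracket k H A act R (b ⊗ₜ a)) := by
  obtain ⟨-, -, hcom, -, hhex, hsym⟩ := hR
  obtain ⟨hone, hmul, hma, -⟩ := hact
  set ρ : H →ₐ[k] Module.End k A := AlgHom.ofLinearMap act hone hmul
  have hρ : act = ρ.toLinearMap := rfl
  have hmod : ∀ h, LinearMap.mul' k A ∘ₗ diagonalAction ρ h = ρ h ∘ₗ LinearMap.mul' k A :=
    fun h ↦ TensorProduct.ext' fun a b ↦ by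
      have hmab := hma h a b
      rw [hρ, pairAct_toLinearMap] at hmab
      exact hmab.symm
  have hc := braiding_mul_self ρ hsym
  rw [hρ, rBracket_eq_braidedCommutator, pairAct_toLinearMap]
  refine ⟨fun h a b ↦ ?_, fun a b c ↦ ?_, fun a b ↦ ?_⟩
  · exact (LinearMap.congr_fun (braidedCommutator_comp_eq_comp (hmod h)
      (braiding_comp_diagonalAction ρ hcom h)) (a ⊗ₜ b)).symm
  · exact braidedCommutator_jacobi_apply (LinearMap.mul'_comp_rTensor_mul'_comp_assoc_symm k A) hc
      (braiding_yangBaxter ρ hcom hhex) (braiding_comp_lTensor_mul' ρ hmod hhex) a b c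
  · exact LinearMap.congr_fun (braidedCommutator_comp_self hc) (b ⊗ₜ a)

end RCommutator
end

section
/- Let H be a Hopf algebra with an invertible element R = Σ R₁⊗R₂ ∈ H⊗H satisfying R·Δ(h) = Δᵒᵖ(h)·R for all h ∈ H, let S be an associative unital k-algebra and ρ: H → S an algebra homomorphism, with adjoint action ad(h)(a) := Σ ρ(h⁽¹⁾)·a·ρ(γ(h⁽²⁾)) on S. For ξ ∈ S define D(ξ) := ξ⊗1 + Σ ρ(R₂) ⊗ ad(R₁)(ξ) ∈ S⊗S. Then for all h ∈ H and ξ ∈ S: (ρ⊗ρ)(Δ(h))·D(ξ) = Σ D(ad(h⁽¹⁾)(ξ))·(ρ⊗ρ)(Δ(h⁽²⁾)). -/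
open TensorProduct

noncomputable section

variable (k : Type*) [Field k] (H : Type*) [Ring H] [HopfAlgebra k H]

variable (A : Type*) [Ring A] [Algebra k A]

/-!
Write `F ⋆ G` for the convolution `h ↦ Σ F(h⁽¹⁾) G(h⁽²⁾)` of linear maps out of `H`.
Since `(ρ ∘ γ) ⋆ ρ = ε`, right multiplication by `x ∈ S` factors as `ρ(·) x = ad(·)(x) ⋆ ρ`.
Together with `(ρ ⊗ ρ) ∘ Δ = (ρ ⊗ 1) ⋆ (1 ⊗ ρ)` and associativity of `⋆`, this moves `ξ ⊗ 1`
across `(ρ ⊗ ρ)(Δ h)` in the first tensor leg. For the `R`-term the same identity in the second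
leg, together with `ad(gh) = ad(g) ∘ ad(h)`, reduces the claim to `Δ(h) R₂₁ = R₂₁ Δᵒᵖ(h)`, the
flip of `R Δ(h) = Δᵒᵖ(h) R`.
-/

open Coalgebra HopfAlgebra WithConv

lemma LinearMap.mulRight_add {R A : Type*} [CommSemiring R] [NonUnitalNonAssocSemiring A]
    [Module R A] [SMulCommClass R A A] [IsScalarTower R A A] (a b : A) :
    LinearMap.mulRight R (a + b) = LinearMap.mulRight R a + LinearMap.mulRight R b :=
  LinearMap.ext fun _ => mul_add _ _ _

lemma toConv_map_comp_comul {R C A B : Type*} [CommSemiring R] [AddCommMonoid C] [Module R C]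
    [CoalgebraStruct R C] [Semiring A] [Algebra R A] [Semiring B] [Algebra R B]
    (f : C →ₗ[R] A) (g : C →ₗ[R] B) :
    toConv (TensorProduct.map f g ∘ₗ comul) =
      toConv ((Algebra.TensorProduct.includeLeft : A →ₐ[R] A ⊗[R] B).toLinearMap ∘ₗ f) *
        toConv ((Algebra.TensorProduct.includeRight : B →ₐ[R] A ⊗[R] B).toLinearMap ∘ₗ g) := by
  rw [LinearMap.convMul_def, ← LinearMap.comp_assoc]
  congr 2
  ext a b
  simp

lemma toConv_comp_antipode_mul_self {R C A : Type*} [CommSemiring R] [Semiring C]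
    [HopfAlgebra R C] [Semiring A] [Algebra R A] (f : C →ₐ[R] A) :
    toConv (f.toLinearMap ∘ₗ antipode R) * toConv f.toLinearMap = 1 := by
  have h := LinearMap.algHom_comp_convMul_distrib f (toConv (antipode R)) (toConv LinearMap.id)
  rw [LinearMap.antipode_mul_id] at h
  ext c
  simpa using (congrArg (fun φ => φ c) h).symm

lemma mul_comm_eq_comm_mul_comm_of_mul_eq {R C : Type*} [CommSemiring R] [Semiring C]
    [Algebra R C] {w d : C ⊗[R] C} (hw : w * d = TensorProduct.comm R C C d * w) :
    d * TensorProduct.comm R C C w = TensorProduct.comm R C C w * TensorProduct.comm R C C d := by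
  have h := congrArg (Algebra.TensorProduct.comm R C C) hw
  rw [map_mul, map_mul] at h
  change TensorProduct.comm R C C w * TensorProduct.comm R C C d =
    TensorProduct.comm R C C (TensorProduct.comm R C C d) * TensorProduct.comm R C C w at h
  rw [TensorProduct.comm_comm] at h
  exact h.symm

section AdjointAction

variable {k H} {S : Type*} [Ring S] [Algebra k S]

lemma sandwich_flip (α β : H →ₗ[k] S) (x : S) :
    (sandwich k H α β).flip x =
      LinearMap.mul' k S ∘ₗ TensorProduct.map (LinearMap.mulRight k x ∘ₗ α) β := by
  ext a b
  simp [sandwich, bcomp, mul_assoc]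

lemma toConv_adAct_flip (ρ : H →ₗ[k] S) (x : S) :
    toConv ((adAct k H ρ).flip x) =
      toConv (LinearMap.mulRight k x ∘ₗ ρ) * toConv (ρ ∘ₗ antipode k) := by
  rw [LinearMap.convMul_def, ← LinearMap.comp_assoc, ← sandwich_flip]
  rfl

lemma toConv_mulRight_comp (ρ : H →ₐ[k] S) (x : S) :
    toConv (LinearMap.mulRight k x ∘ₗ ρ.toLinearMap) =
      toConv ((adAct k H ρ.toLinearMap).flip x) * toConv ρ.toLinearMap := by
  rw [toConv_adAct_flip, mul_assoc, toConv_comp_antipode_mul_self, mul_one]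

lemma toConv_comp_mulRight_comp (ρ : H →ₐ[k] S) {T : Type*} [Semiring T] [Algebra k T]
    (φ : S →ₐ[k] T) (y : S) :
    toConv (φ.toLinearMap ∘ₗ LinearMap.mulRight k y ∘ₗ ρ.toLinearMap) =
      toConv (φ.toLinearMap ∘ₗ (adAct k H ρ.toLinearMap).flip y) *
        toConv (φ.toLinearMap ∘ₗ ρ.toLinearMap) := by
  rw [← ofConv_toConv (LinearMap.mulRight k y ∘ₗ ρ.toLinearMap), toConv_mulRight_comp,
    LinearMap.algHom_comp_convMul_distrib]

lemma adAct_apply_eq_sum (ρ : H →ₗ[k] S) {h : H} {ι : Type*} (r : Repr k h ι) (x : S) :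
    adAct k H ρ h x = ∑ i ∈ r.index, ρ (r.left i) * x * ρ (antipode k (r.right i)) := by
  rw [← LinearMap.flip_apply, ← ofConv_toConv ((adAct k H ρ).flip x), toConv_adAct_flip,
    r.convMul_apply]
  rfl

lemma adAct_mul (ρ : H →ₐ[k] S) (g h : H) :
    adAct k H ρ.toLinearMap (g * h) =
      adAct k H ρ.toLinearMap g ∘ₗ adAct k H ρ.toLinearMap h := by
  ext x
  simp only [LinearMap.comp_apply, adAct_apply_eq_sum _ ((ℛ k g).mul (ℛ k h)),
    adAct_apply_eq_sum _ (ℛ k g), adAct_apply_eq_sum _ (ℛ k h), Repr.mul_index, Repr.mul_left,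
    Repr.mul_right, Finset.sum_product, Finset.mul_sum, Finset.sum_mul, antipode_mul_antidistrib,
    map_mul, mul_assoc, AlgHom.toLinearMap_apply]

variable (ρ : H →ₐ[k] S)

def tensorAdAct (ξ : S) : H ⊗[k] H →ₗ[k] S ⊗[k] S :=
  TensorProduct.map ρ.toLinearMap ((adAct k H ρ.toLinearMap).flip ξ)

local notation "ιₗ" => AlgHom.toLinearMap Algebra.TensorProduct.includeLeft
local notation "ιᵣ" => AlgHom.toLinearMap Algebra.TensorProduct.includeRight

lemma tensorAdAct_mul_tmul_one (ξ : S) (w : H ⊗[k] H) (x : H) :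
    tensorAdAct ρ ξ w * (ρ x ⊗ₜ 1) = tensorAdAct ρ ξ (w * (x ⊗ₜ 1)) := by
  induction w using TensorProduct.induction_on with
  | zero => simp
  | tmul a b => simp [tensorAdAct, Algebra.TensorProduct.tmul_mul_tmul]
  | add w w' hw hw' => simp only [add_mul, hw, hw', map_add]

lemma tensorAdAct_adAct (ξ : S) (h : H) (w : H ⊗[k] H) :
    tensorAdAct ρ (adAct k H ρ.toLinearMap h ξ) w = tensorAdAct ρ ξ (w * (1 ⊗ₜ h)) := by
  induction w using TensorProduct.induction_on with
  | zero => simp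
  | tmul a b => simp [tensorAdAct, Algebra.TensorProduct.tmul_mul_tmul, adAct_mul]
  | add w w' hw hw' => simp only [add_mul, hw, hw', map_add]

lemma toConv_tensorAdAct_mul_includeLeft (ξ : S) (w : H ⊗[k] H) :
    toConv (tensorAdAct ρ ξ ∘ₗ LinearMap.mulLeft k w ∘ₗ TensorProduct.mk k H H 1) *
        toConv (ιₗ ∘ₗ ρ.toLinearMap) =
      toConv (tensorAdAct ρ ξ ∘ₗ LinearMap.mulLeft k w ∘ₗ
        (TensorProduct.comm k H H).toLinearMap ∘ₗ comul) := by
  rw [LinearMap.convMul_def]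
  congr 1
  simp only [← LinearMap.comp_assoc]
  congr 1
  ext a b
  simp [tensorAdAct_mul_tmul_one, mul_assoc, Algebra.TensorProduct.tmul_mul_tmul]

lemma toConv_mulRight_tensorAdAct_comp (ξ : S) (w : H ⊗[k] H) :
    toConv (LinearMap.mulRight k (tensorAdAct ρ ξ w) ∘ₗ
        TensorProduct.map ρ.toLinearMap ρ.toLinearMap ∘ₗ comul) =
      toConv (tensorAdAct ρ ξ ∘ₗ LinearMap.mulRight k w ∘ₗ comul) *
        toConv (ιᵣ ∘ₗ ρ.toLinearMap) := by
  induction w using TensorProduct.induction_on with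
  | zero => simp [LinearMap.mulRight_zero_eq_zero]
  | tmul a b =>
    calc _ = toConv (TensorProduct.map (LinearMap.mulRight k (ρ a) ∘ₗ ρ.toLinearMap)
            (LinearMap.mulRight k (adAct k H ρ.toLinearMap b ξ) ∘ₗ ρ.toLinearMap) ∘ₗ comul) := by
          congr 1
          rw [← LinearMap.comp_assoc]
          congr 1
          ext x y
          simp [tensorAdAct, Algebra.TensorProduct.tmul_mul_tmul]
      _ = toConv (TensorProduct.map (LinearMap.mulRight k (ρ a) ∘ₗ ρ.toLinearMap)
            ((adAct k H ρ.toLinearMap).flip (adAct k H ρ.toLinearMap b ξ)) ∘ₗ comul) *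
            toConv (ιᵣ ∘ₗ ρ.toLinearMap) := by
          rw [toConv_map_comp_comul, toConv_map_comp_comul,
            toConv_comp_mulRight_comp ρ Algebra.TensorProduct.includeRight, mul_assoc]
      _ = _ := by
          congr 2
          rw [← LinearMap.comp_assoc]
          congr 1
          ext x y
          simp [tensorAdAct, adAct_mul]
  | add w w' hw hw' =>
    simp only [map_add, LinearMap.mulRight_add, LinearMap.add_comp, LinearMap.comp_add,
      toConv_add, add_mul, hw, hw']

lemma toConv_mulRight_tmul_one_comp (ξ : S) :
    toConv (LinearMap.mulRight k (ξ ⊗ₜ[k] (1 : S)) ∘ₗ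
        TensorProduct.map ρ.toLinearMap ρ.toLinearMap ∘ₗ comul) =
      toConv (ιₗ ∘ₗ (adAct k H ρ.toLinearMap).flip ξ) *
        toConv (TensorProduct.map ρ.toLinearMap ρ.toLinearMap ∘ₗ comul) := by
  calc _ = toConv (TensorProduct.map (LinearMap.mulRight k ξ ∘ₗ ρ.toLinearMap) ρ.toLinearMap ∘ₗ
        comul) := by
        congr 1
        rw [← LinearMap.comp_assoc]
        congr 1
        ext x y
        simp [Algebra.TensorProduct.tmul_mul_tmul]
    _ = _ := by
        rw [toConv_map_comp_comul, toConv_comp_mulRight_comp ρ Algebra.TensorProduct.includeLeft,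
          toConv_map_comp_comul, mul_assoc]

lemma toConv_mulRight_tensorAdAct_comp_of_comul_mul (w : H ⊗[k] H)
    (hw : ∀ g : H, comul g * w = w * TensorProduct.comm k H H (comul g)) (ξ : S) :
    toConv (LinearMap.mulRight k (tensorAdAct ρ ξ w) ∘ₗ
        TensorProduct.map ρ.toLinearMap ρ.toLinearMap ∘ₗ comul) =
      toConv (tensorAdAct ρ ξ ∘ₗ LinearMap.mulLeft k w ∘ₗ TensorProduct.mk k H H 1) *
        toConv (TensorProduct.map ρ.toLinearMap ρ.toLinearMap ∘ₗ comul) := by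
  rw [toConv_mulRight_tensorAdAct_comp, toConv_map_comp_comul, ← mul_assoc,
    toConv_tensorAdAct_mul_includeLeft]
  congr 3
  ext g
  simp [hw]

def quasiPrimitiveComul (w : H ⊗[k] H) : S →ₗ[k] S ⊗[k] S :=
  (TensorProduct.mk k S S).flip 1 +
    TensorProduct.lift
      (bcomp k H (TensorProduct.mk k S S ∘ₗ ρ.toLinearMap) (adAct k H ρ.toLinearMap)) w

lemma quasiPrimitiveComul_apply (w : H ⊗[k] H) (ξ : S) :
    quasiPrimitiveComul ρ w ξ = ξ ⊗ₜ 1 + tensorAdAct ρ ξ w := by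
  rw [quasiPrimitiveComul, LinearMap.add_apply]
  congr 1
  induction w using TensorProduct.induction_on with
  | zero => simp
  | tmul a b => rfl
  | add w w' hw hw' => simp only [map_add, LinearMap.add_apply, hw, hw']

lemma quasiPrimitiveComul_comp_adAct (w : H ⊗[k] H) (ξ : S) :
    quasiPrimitiveComul ρ w ∘ₗ (adAct k H ρ.toLinearMap).flip ξ =
      ιₗ ∘ₗ (adAct k H ρ.toLinearMap).flip ξ +
        tensorAdAct ρ ξ ∘ₗ LinearMap.mulLeft k w ∘ₗ TensorProduct.mk k H H 1 := by
  ext g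
  simp [quasiPrimitiveComul_apply, tensorAdAct_adAct]

theorem toConv_mulRight_quasiPrimitiveComul_comp (w : H ⊗[k] H)
    (hw : ∀ g : H, comul g * w = w * TensorProduct.comm k H H (comul g)) (ξ : S) :
    toConv (LinearMap.mulRight k (quasiPrimitiveComul ρ w ξ) ∘ₗ
        TensorProduct.map ρ.toLinearMap ρ.toLinearMap ∘ₗ comul) =
      toConv (quasiPrimitiveComul ρ w ∘ₗ (adAct k H ρ.toLinearMap).flip ξ) *
        toConv (TensorProduct.map ρ.toLinearMap ρ.toLinearMap ∘ₗ comul) := by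
  rw [quasiPrimitiveComul_comp_adAct, toConv_add, add_mul, ← toConv_mulRight_tmul_one_comp,
    ← toConv_mulRight_tensorAdAct_comp_of_comul_mul ρ w hw, ← toConv_add, ← LinearMap.add_comp,
    quasiPrimitiveComul_apply]
  congr 2
  ext
  simp [mul_add]

lemma lift_flip_bcomp_apply {M E : Type*} [AddCommMonoid M] [Module k M] [Ring E]
    [Algebra k E] (F : H →ₗ[k] E) (G : H →ₗ[k] M →ₗ[k] M) (D : M →ₗ[k] E) (t : H ⊗[k] H) (ξ : M) :
    TensorProduct.lift ((bcomp k H ((LinearMap.mul k E).flip ∘ₗ F)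
        ((LinearMap.llcomp k M M E D) ∘ₗ G)).flip) t ξ =
      LinearMap.mul' k E (TensorProduct.map (D ∘ₗ G.flip ξ) F t) := by
  induction t using TensorProduct.induction_on with
  | zero => simp
  | tmul a b => rfl
  | add t t' ht ht' => simp only [map_add, LinearMap.add_apply, ht, ht']

end AdjointAction

theorem quasi_primitive_comul_cross_relation
    (R : H ⊗[k] H)
    (hRcomul : ∀ h : H,
      R * comulL k H h = (TensorProduct.comm k H H) (comulL k H h) * R)
    (S : Type*) [Ring S] [Algebra k S] (ρ : H →ₐ[k] S)
    (D : S →ₗ[k] S ⊗[k] S)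
    (hD : D = (TensorProduct.mk k S S).flip 1 +
      TensorProduct.lift
        (bcomp k H ((TensorProduct.mk k S S) ∘ₗ ρ.toLinearMap) (adAct k H ρ.toLinearMap))
        ((TensorProduct.comm k H H) R)) :
    ∀ (h : H) (ξ : S),
      (TensorProduct.map ρ.toLinearMap ρ.toLinearMap) (comulL k H h) * D ξ
      = TensorProduct.lift
          ((bcomp k H
              ((LinearMap.mul k (S ⊗[k] S)).flip ∘ₗ
                (TensorProduct.map ρ.toLinearMap ρ.toLinearMap) ∘ₗ comulL k H)
              ((LinearMap.llcomp k S S (S ⊗[k] S) D) ∘ₗ adAct k H ρ.toLinearMap)).flip)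
          (comulL k H h) ξ := by
  intro h ξ
  subst hD
  rw [lift_flip_bcomp_apply]
  exact congrArg (fun φ => φ h)
    (toConv_mulRight_quasiPrimitiveComul_comp ρ _
      (fun g => mul_comm_eq_comm_mul_comm_of_mul_eq (hRcomul g)) ξ)
end
end
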